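/- Let Θ and G be finite-dimensional real inner product spaces, let K be a positive integer, let L_1,…,L_K : Θ → G be continuous linear maps not all zero, let y_1,…,y_K ∈ G, let ω_1,…,ω_K ∈ [0,1] with ω_1+⋯+ω_K = 1, and let R : G → G be firmly nonexpansive. Then the operator F : Θ → Θ defined by F(θ) = Σ_{k=1}^K ω_k L_k*(R(L_k θ) − y_k) is monotone and Lipschitz continuous with Lipschitz constant max_{1≤k≤K}‖L_k‖². -/

import Mathlib

/-!
Each summand `θ ↦ L* (R (L θ) - y)` is monotone because `⟪θ₁ - θ₂, L* (R z₁ - R z₂)⟫ =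
⟪z₁ - z₂, R z₁ - R z₂⟫` with `zᵢ = L θᵢ`, and firm nonexpansiveness bounds this from below by
`‖R z₁ - R z₂‖² ≥ 0`. By Cauchy–Schwarz firm nonexpansiveness also makes `R` 1-Lipschitz, so the
summand is `‖L‖²`-Lipschitz, using `‖L*‖ = ‖L‖`. Both properties survive convex combinations,
and a convex combination of the constants `‖L k‖²` is at most their maximum.
-/

open scoped RealInnerProductSpace NNReal InnerProduct

section

variable {E F : Type*} [NormedAddCommGroup E] [InnerProductSpace ℝ E]
  [NormedAddCommGroup F] [InnerProductSpace ℝ F]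

def IsMonotoneOperator (T : E → E) : Prop :=
  ∀ x y, 0 ≤ ⟪x - y, T x - T y⟫

def IsFirmlyNonexpansive (R : E → E) : Prop :=
  ∀ x y, ‖R x - R y‖ ^ 2 ≤ ⟪x - y, R x - R y⟫

theorem IsFirmlyNonexpansive.isMonotoneOperator {R : E → E} (hR : IsFirmlyNonexpansive R) :
    IsMonotoneOperator R :=
  fun x y => (sq_nonneg _).trans (hR x y)

theorem IsFirmlyNonexpansive.lipschitzWith {R : E → E} (hR : IsFirmlyNonexpansive R) :
    LipschitzWith 1 R := by
  refine LipschitzWith.of_dist_le_mul fun x y => ?_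
  rw [dist_eq_norm, dist_eq_norm, NNReal.coe_one, one_mul]
  have h : ‖R x - R y‖ ^ 2 ≤ ‖x - y‖ * ‖R x - R y‖ :=
    (hR x y).trans (real_inner_le_norm _ _)
  nlinarith [norm_nonneg (x - y), norm_nonneg (R x - R y)]

theorem IsMonotoneOperator.sum_smul {ι : Type*} (s : Finset ι) {ω : ι → ℝ}
    (hω : ∀ k ∈ s, 0 ≤ ω k) {T : ι → E → E} (hT : ∀ k ∈ s, IsMonotoneOperator (T k)) :
    IsMonotoneOperator fun x => ∑ k ∈ s, ω k • T k x := by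
  intro x y
  rw [← Finset.sum_sub_distrib, inner_sum]
  refine Finset.sum_nonneg fun k hk => ?_
  rw [← smul_sub, real_inner_smul_right]
  exact mul_nonneg (hω k hk) (hT k hk x y)

variable [CompleteSpace E] [CompleteSpace F]

theorem IsMonotoneOperator.adjoint_conj {R : F → F} (hR : IsMonotoneOperator R)
    (A : E →L[ℝ] F) (y : F) : IsMonotoneOperator fun x => (A†) (R (A x) - y) := by
  intro x₁ x₂
  rw [← map_sub, sub_sub_sub_cancel_right, ContinuousLinearMap.adjoint_inner_right, map_sub]
  exact hR _ _

theorem LipschitzWith.adjoint_conj {R : F → F} (hR : LipschitzWith 1 R) (A : E →L[ℝ] F)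
    (y : F) : LipschitzWith (‖A‖₊ ^ 2) fun x => (A†) (R (A x) - y) := by
  have h := (A†).lipschitz.comp
    (((IsometryEquiv.subRight y).isometry.lipschitz.comp hR).comp A.lipschitz)
  rwa [LinearIsometryEquiv.nnnorm_map, one_mul, one_mul, ← sq] at h

end

theorem norm_sum_smul_sub_sum_smul_le {ι E F : Type*} [SeminormedAddCommGroup E]
    [SeminormedAddCommGroup F] [NormedSpace ℝ F] (s : Finset ι) {ω : ι → ℝ}
    (hω : ∀ k ∈ s, 0 ≤ ω k) {T : ι → E → F} {C : ι → ℝ≥0}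
    (hT : ∀ k ∈ s, LipschitzWith (C k) (T k)) (x y : E) :
    ‖∑ k ∈ s, ω k • T k x - ∑ k ∈ s, ω k • T k y‖ ≤ (∑ k ∈ s, ω k * C k) * ‖x - y‖ :=
  calc ‖∑ k ∈ s, ω k • T k x - ∑ k ∈ s, ω k • T k y‖
      = ‖∑ k ∈ s, ω k • (T k x - T k y)‖ := by simp only [← Finset.sum_sub_distrib, smul_sub]
    _ ≤ ∑ k ∈ s, ‖ω k • (T k x - T k y)‖ := norm_sum_le _ _
    _ ≤ ∑ k ∈ s, ω k * (C k * ‖x - y‖) := Finset.sum_le_sum fun k hk => by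
        rw [norm_smul, Real.norm_of_nonneg (hω k hk)]
        exact mul_le_mul_of_nonneg_left ((hT k hk).norm_sub_le x y) (hω k hk)
    _ = (∑ k ∈ s, ω k * C k) * ‖x - y‖ := by simp only [Finset.sum_mul, mul_assoc]

theorem Finset.sum_mul_le_sup'_of_sum_eq_one {ι : Type*} {s : Finset ι} (hs : s.Nonempty)
    {ω : ι → ℝ} (hω : ∀ k ∈ s, 0 ≤ ω k) (hsum : ∑ k ∈ s, ω k = 1) (f : ι → ℝ) :
    ∑ k ∈ s, ω k * f k ≤ s.sup' hs f :=
  calc ∑ k ∈ s, ω k * f k ≤ ∑ k ∈ s, ω k * s.sup' hs f :=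
        Finset.sum_le_sum fun k hk => mul_le_mul_of_nonneg_left (le_sup' f hk) (hω k hk)
    _ = s.sup' hs f := by rw [← Finset.sum_mul, hsum, one_mul]

theorem sum_operator_monotone_lipschitz_general
    {Θ G : Type*} [NormedAddCommGroup Θ] [InnerProductSpace ℝ Θ] [FiniteDimensional ℝ Θ]
    [NormedAddCommGroup G] [InnerProductSpace ℝ G] [FiniteDimensional ℝ G]
    (K : ℕ) (hK : 0 < K)
    (L : Fin K → Θ →L[ℝ] G) (y : Fin K → G)
    (ω : Fin K → ℝ) (hω : ∀ k, ω k ∈ Set.Icc (0 : ℝ) 1) (hωsum : ∑ k, ω k = 1)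
    (R : G → G) (hR : ∀ z₁ z₂ : G, ‖R z₁ - R z₂‖ ^ 2 ≤ ⟪z₁ - z₂, R z₁ - R z₂⟫)
    (F : Θ → Θ)
    (hF : ∀ θ : Θ, F θ = ∑ k, ω k • ContinuousLinearMap.adjoint (L k) (R (L k θ) - y k)) :
    (∀ θ₁ θ₂ : Θ, 0 ≤ ⟪θ₁ - θ₂, F θ₁ - F θ₂⟫) ∧
      (∀ θ₁ θ₂ : Θ,
        ‖F θ₁ - F θ₂‖ ≤
          (Finset.univ.sup' (Finset.univ_nonempty_iff.mpr ⟨⟨0, hK⟩⟩) fun k => ‖L k‖ ^ 2) *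
            ‖θ₁ - θ₂‖) := by
  obtain rfl : F = fun θ => ∑ k, ω k • ((L k)†) (R (L k θ) - y k) := funext hF
  have hω₀ : ∀ k ∈ Finset.univ, 0 ≤ ω k := fun k _ => (hω k).1
  have hRfne : IsFirmlyNonexpansive R := hR
  refine ⟨IsMonotoneOperator.sum_smul _ hω₀ fun k _ =>
    hRfne.isMonotoneOperator.adjoint_conj (L k) (y k), fun θ₁ θ₂ => ?_⟩
  refine (norm_sum_smul_sub_sum_smul_le _ hω₀
    (fun k _ => hRfne.lipschitzWith.adjoint_conj (L k) (y k)) θ₁ θ₂).trans ?_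
  gcongr
  push_cast
  exact Finset.sum_mul_le_sup'_of_sum_eq_one _ hω₀ hωsum _

/-- F(θ) = Σ_k ω_k L_k*(R(L_k θ) − y_k) is monotone and Lipschitz continuous
with constant max_k ‖L_k‖². -/
theorem sum_operator_monotone_lipschitz
    {Θ G : Type*} [NormedAddCommGroup Θ] [InnerProductSpace ℝ Θ] [FiniteDimensional ℝ Θ]
    [NormedAddCommGroup G] [InnerProductSpace ℝ G] [FiniteDimensional ℝ G]
    (K : ℕ) (hK : 0 < K)
    (L : Fin K → Θ →L[ℝ] G) (hL : ∃ k, L k ≠ 0) (y : Fin K → G)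
    (ω : Fin K → ℝ) (hω : ∀ k, ω k ∈ Set.Icc (0 : ℝ) 1) (hωsum : ∑ k, ω k = 1)
    (R : G → G) (hR : ∀ z₁ z₂ : G, ‖R z₁ - R z₂‖ ^ 2 ≤ ⟪z₁ - z₂, R z₁ - R z₂⟫)
    (F : Θ → Θ)
    (hF : ∀ θ : Θ, F θ = ∑ k, ω k • ContinuousLinearMap.adjoint (L k) (R (L k θ) - y k)) :
    (∀ θ₁ θ₂ : Θ, 0 ≤ ⟪θ₁ - θ₂, F θ₁ - F θ₂⟫) ∧
      (∀ θ₁ θ₂ : Θ,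
        ‖F θ₁ - F θ₂‖ ≤
          (Finset.univ.sup' (Finset.univ_nonempty_iff.mpr ⟨⟨0, hK⟩⟩) fun k => ‖L k‖ ^ 2) *
            ‖θ₁ - θ₂‖) :=
  sum_operator_monotone_lipschitz_general K hK L y ω hω hωsum R hR F hF
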